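/- In the unitary product-state setup, for every natural number α ≥ 2, the function t ↦ trace((ρ_A(t))^α) is twice differentiable at t = 0 and its second derivative at t = 0 equals −2α · Σ_{n,m∈N} Cov_A(n,m) · Cov_B(n,m). (Equivalently, the Rényi entropy S_α = (1/(1−α))·log trace ρ_A^α satisfies d²S_α/dt²|_{t=0} = (2α/(α−1)) · Σ_{n,m} Cov_A(n,m)·Cov_B(n,m), so all Rényi entropies grow at leading order with the same universal timescale.) -/

import Mathlib

open Matrix
open scoped Kronecker Matrix

/-- Partial trace over the second tensor factor. -/
noncomputable def ptraceB {ιA ιB : Type*} [Fintype ιA] [Fintype ιB]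
    (ρ : Matrix (ιA × ιB) (ιA × ιB) ℂ) : Matrix ιA ιA ℂ :=
  Matrix.of fun a a' => ∑ b, ρ (a, b) (a', b)

/-- The expectation value `⟨M⟩_ψ = ψᴴ · M · ψ` of a matrix in a vector state. -/
noncomputable def expval {ι : Type*} [Fintype ι] (ψ : ι → ℂ) (M : Matrix ι ι ℂ) : ℂ :=
  star ψ ⬝ᵥ (M *ᵥ ψ)

/-!
Write `ρ t = exp (t • K) * ρ₀ * exp (-(t • K))` with `K = -i H`, so that `ρ' = ⁅K, ρ⁆`, and put
`P = ρ_A 0 = ψA ψAᴴ`, `c = ρ_A' 0 = tr_B ⁅K, ρ₀⁆`, `d = ρ_A'' 0 = tr_B ⁅K, ⁅K, ρ₀⁆⁆`.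
Differentiating `tr (ρ_A ^ α)` twice gives `α (∑ᵢ tr (P ^ (α-2-i) c P ^ i c) + tr (P ^ (α-1) d))`.
Now `c = ⁅-i X, P⁆` for the mean-field operator `X = ∑ₙ ⟨Bₙ⟩ Aₙ`, so `c` is off-diagonal with
respect to the projection `P` (`P c P = 0`, `c = P c + c P`): only the terms `i = 0` and
`i = α - 2` survive, and the sum is `2 tr (P c²) = 2 ⟨X (1 - P) X⟩ = 2 ∑ ⟨Bₙ⟩⟨Bₘ⟩ Cov_A(n,m)`.
On the other hand `tr (P d) = tr ((P ⊗ 1) ⁅K, ⁅K, ρ₀⁆⁆) = -2 tr (H ((1 - P) ⊗ 1) H ρ₀)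
= -2 ∑ Cov_A(n,m) ⟨Bₙ Bₘ⟩`, and the two contributions add up to `-2α ∑ Cov_A Cov_B`.
-/

-- `LieRing.ofAssociativeRing` is not a global instance, so `smul_lie` does not apply to the
-- commutator bracket `Ring.instBracket`.
namespace Ring

variable {R A : Type*} [CommSemiring R] [Ring A] [Algebra R A]

theorem smul_lie (r : R) (x y : A) : ⁅r • x, y⁆ = r • ⁅x, y⁆ := by
  simp only [Ring.lie_def, smul_mul_assoc, mul_smul_comm, smul_sub]

theorem lie_smul (r : R) (x y : A) : ⁅x, r • y⁆ = r • ⁅x, y⁆ := by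
  simp only [Ring.lie_def, smul_mul_assoc, mul_smul_comm, smul_sub]

end Ring

namespace IsIdempotentElem

variable {R : Type*} [Ring R] {P : R}

theorem mul_lie_mul_eq_zero (hP : IsIdempotentElem P) (X : R) : P * ⁅X, P⁆ * P = 0 := by
  have hPP : ∀ Y, P * (P * Y) = P * Y := fun Y => by rw [← mul_assoc, hP.eq]
  simp only [Ring.lie_def, mul_sub, sub_mul, mul_assoc, hP.eq, hPP, sub_self]

theorem mul_lie_add_lie_mul (hP : IsIdempotentElem P) (X : R) :
    P * ⁅X, P⁆ + ⁅X, P⁆ * P = ⁅X, P⁆ := by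
  have hPP : ∀ Y, P * (P * Y) = P * Y := fun Y => by rw [← mul_assoc, hP.eq]
  simp only [Ring.lie_def, mul_sub, sub_mul, mul_assoc, hP.eq, hPP]
  abel

end IsIdempotentElem

section TraceAlgebra

variable {n R : Type*} [Fintype n] [DecidableEq n] [CommRing R] {P : Matrix n n R}

theorem IsIdempotentElem.trace_sum_pow_mul_mul_pow_mul (hP : IsIdempotentElem P)
    {c : Matrix n n R} (hPcP : P * c * P = 0) (hc : P * c + c * P = c) (k : ℕ) :
    (∑ i ∈ Finset.range (k + 1), P ^ (k - i) * c * P ^ i * c).trace = 2 * (P * c * c).trace := by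
  have hcPc : (c * P * c).trace = (P * c * c).trace := by
    rw [Matrix.mul_assoc, trace_mul_comm, Matrix.mul_assoc]
  cases k with
  | zero =>
    simp only [zero_add, Finset.sum_range_one, Nat.sub_self, pow_zero, Matrix.one_mul,
      Matrix.mul_one]
    nth_rewrite 1 [← hc]
    rw [Matrix.add_mul, trace_add, hcPc, two_mul]
  | succ m =>
    have hmid : ∀ i ∈ Finset.range m, (P ^ (m + 1 - (i + 1)) * c * P ^ (i + 1) * c).trace = 0 := by
      intro i hi
      rw [Finset.mem_range] at hi
      rw [hP.pow_eq (by omega), hP.pow_eq (by omega), hPcP, Matrix.zero_mul, trace_zero]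
    rw [Finset.sum_range_succ', Finset.sum_range_succ, trace_add, trace_add, trace_sum,
      Finset.sum_eq_zero hmid]
    simp only [Nat.sub_self, Nat.sub_zero, pow_zero, Matrix.one_mul, Matrix.mul_one,
      hP.pow_eq (Nat.succ_ne_zero m), hcPc]
    ring

theorem IsIdempotentElem.trace_mul_lie_mul_lie (hP : IsIdempotentElem P) (X : Matrix n n R) :
    (P * ⁅X, P⁆ * ⁅X, P⁆).trace = -(X * (1 - P) * X * P).trace := by
  have hPP : ∀ Y, P * (P * Y) = P * Y := fun Y => by rw [← Matrix.mul_assoc, hP.eq]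
  have h1 : (P * (X * (P * (X * P)))).trace = (X * (P * (X * P))).trace := by
    rw [trace_mul_comm]; simp only [Matrix.mul_assoc, hP.eq]
  have h2 : (P * (X * (X * P))).trace = (X * (X * P)).trace := by
    rw [trace_mul_comm]; simp only [Matrix.mul_assoc, hP.eq]
  simp only [Ring.lie_def, Matrix.mul_sub, Matrix.sub_mul, Matrix.mul_assoc, hPP,
    Matrix.mul_one, trace_sub, h1, h2]
  ring

theorem trace_mul_lie_lie_of_mul_eq {E ρ : Matrix n n R} (hEρ : E * ρ = ρ) (hρE : ρ * E = ρ)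
    (H : Matrix n n R) :
    (E * ⁅H, ⁅H, ρ⁆⁆).trace = 2 * (H * (1 - E) * H * ρ).trace := by
  have h1 : (E * (H * H * ρ)).trace = (H * H * ρ).trace := by
    rw [trace_mul_comm, Matrix.mul_assoc, hρE]
  have h2 : (E * (H * ρ * H)).trace = (H * E * H * ρ).trace := by
    rw [← Matrix.mul_assoc, trace_mul_comm]; simp only [Matrix.mul_assoc]
  have h3 : (E * (ρ * H * H)).trace = (H * H * ρ).trace := by
    rw [← Matrix.mul_assoc, ← Matrix.mul_assoc, hEρ, Matrix.mul_assoc, trace_mul_comm]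
  have hexp : E * ⁅H, ⁅H, ρ⁆⁆ = E * (H * H * ρ) - 2 • (E * (H * ρ * H)) + E * (ρ * H * H) := by
    simp only [Ring.lie_def]; noncomm_ring
  rw [hexp, trace_add, trace_sub, trace_smul, h1, h2, h3]
  simp only [Matrix.mul_sub, Matrix.sub_mul, Matrix.mul_one, trace_sub, nsmul_eq_mul]
  push_cast; ring

end TraceAlgebra

section VectorState

variable {ι : Type*} [Fintype ι] (ψ : ι → ℂ)

theorem expval_sub (X Y : Matrix ι ι ℂ) : expval ψ (X - Y) = expval ψ X - expval ψ Y := by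
  simp only [expval, sub_mulVec, dotProduct_sub]

theorem expval_smul (z : ℂ) (X : Matrix ι ι ℂ) : expval ψ (z • X) = z • expval ψ X := by
  simp only [expval, smul_mulVec, dotProduct_smul]

theorem trace_mul_vecMulVec_star (M : Matrix ι ι ℂ) :
    (M * vecMulVec ψ (star ψ)).trace = expval ψ M := by
  rw [mul_vecMulVec, trace_vecMulVec, dotProduct_comm, expval]

theorem trace_vecMulVec_star_mul (M : Matrix ι ι ℂ) :
    (vecMulVec ψ (star ψ) * M).trace = expval ψ M := by
  rw [trace_mul_comm, trace_mul_vecMulVec_star]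

theorem vecMulVec_star_mul_mul_vecMulVec_star (M : Matrix ι ι ℂ) :
    vecMulVec ψ (star ψ) * M * vecMulVec ψ (star ψ) = expval ψ M • vecMulVec ψ (star ψ) := by
  rw [Matrix.mul_assoc, mul_vecMulVec, vecMulVec_mul_vecMulVec, vecMulVec_smul, expval]

theorem expval_mul_vecMulVec_star_mul (X Y : Matrix ι ι ℂ) :
    expval ψ (X * vecMulVec ψ (star ψ) * Y) = expval ψ X * expval ψ Y := by
  rw [← trace_mul_vecMulVec_star, trace_mul_comm, ← Matrix.mul_assoc, ← Matrix.mul_assoc,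
    vecMulVec_star_mul_mul_vecMulVec_star, smul_mul_assoc, trace_smul,
    trace_vecMulVec_star_mul, smul_eq_mul]

theorem expval_mul_one_sub_vecMulVec_star_mul [DecidableEq ι] (X Y : Matrix ι ι ℂ) :
    expval ψ (X * (1 - vecMulVec ψ (star ψ)) * Y) = expval ψ (X * Y) - expval ψ X * expval ψ Y := by
  rw [Matrix.mul_sub, Matrix.mul_one, Matrix.sub_mul, expval_sub, expval_mul_vecMulVec_star_mul]

theorem expval_sum_smul_mul_mul_sum_smul {N : Type*} [Fintype N] (A : N → Matrix ι ι ℂ)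
    (b : N → ℂ) (M : Matrix ι ι ℂ) :
    expval ψ ((∑ n, b n • A n) * M * ∑ n, b n • A n)
      = ∑ n, ∑ m, expval ψ (A n * M * A m) * (b n * b m) := by
  simp only [← trace_mul_vecMulVec_star, Finset.sum_mul, Finset.mul_sum, trace_sum,
    smul_mul_assoc, mul_smul_comm, trace_smul, smul_eq_mul]
  exact Finset.sum_comm.trans
    (Finset.sum_congr rfl fun _ _ => Finset.sum_congr rfl fun _ _ => by ring)

theorem trace_vecMulVec_star_self {ψ : ι → ℂ} (hψ : star ψ ⬝ᵥ ψ = 1) :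
    (vecMulVec ψ (star ψ)).trace = 1 := by
  rw [trace_vecMulVec, dotProduct_comm, hψ]

theorem isIdempotentElem_vecMulVec_star {ψ : ι → ℂ} (hψ : star ψ ⬝ᵥ ψ = 1) :
    IsIdempotentElem (vecMulVec ψ (star ψ)) := by
  rw [IsIdempotentElem, vecMulVec_mul_vecMulVec, hψ, one_smul]

end VectorState

section PartialTrace

variable {ιA ιB : Type*} [Fintype ιA] [Fintype ιB]

noncomputable def ptraceBLinearMap : Matrix (ιA × ιB) (ιA × ιB) ℂ →ₗ[ℂ] Matrix ιA ιA ℂ where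
  toFun := ptraceB
  map_add' X Y := by ext; simp [ptraceB, Finset.sum_add_distrib]
  map_smul' z X := by ext; simp [ptraceB, Finset.mul_sum]

theorem ptraceBLinearMap_apply (X : Matrix (ιA × ιB) (ιA × ιB) ℂ) :
    ptraceBLinearMap X = ptraceB X :=
  rfl

theorem ptraceB_smul (z : ℂ) (X : Matrix (ιA × ιB) (ιA × ιB) ℂ) :
    ptraceB (z • X) = z • ptraceB X :=
  ptraceBLinearMap.map_smul z X

theorem ptraceB_kronecker (C : Matrix ιA ιA ℂ) (D : Matrix ιB ιB ℂ) :
    ptraceB (C ⊗ₖ D) = D.trace • C := by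
  ext a a'
  simp [ptraceB, trace, Finset.mul_sum, mul_comm]

theorem ptraceB_kronecker_vecMulVec_star {ψ : ιB → ℂ} (hψ : star ψ ⬝ᵥ ψ = 1)
    (C : Matrix ιA ιA ℂ) : ptraceB (C ⊗ₖ vecMulVec ψ (star ψ)) = C := by
  rw [ptraceB_kronecker, trace_vecMulVec_star_self hψ, one_smul]

theorem trace_mul_ptraceB [DecidableEq ιB] (M : Matrix ιA ιA ℂ) (X : Matrix (ιA × ιB) (ιA × ιB) ℂ) :
    (M * ptraceB X).trace = ((M ⊗ₖ (1 : Matrix ιB ιB ℂ)) * X).trace := by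
  simp only [trace, diag, mul_apply, ptraceB, of_apply, kroneckerMap_apply, one_apply,
    Fintype.sum_prod_type, Finset.mul_sum, mul_ite, mul_one, mul_zero, ite_mul, zero_mul,
    Finset.sum_ite_eq, Finset.mem_univ, if_true]
  exact Finset.sum_congr rfl fun _ _ => Finset.sum_comm

theorem ptraceB_lie_kronecker_vecMulVec_star {N : Type*} [Fintype N]
    (A : N → Matrix ιA ιA ℂ) (B : N → Matrix ιB ιB ℂ) (C : Matrix ιA ιA ℂ) (ψ : ιB → ℂ) :
    ptraceB ⁅∑ n, A n ⊗ₖ B n, C ⊗ₖ vecMulVec ψ (star ψ)⁆ = ⁅∑ n, expval ψ (B n) • A n, C⁆ := by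
  simp only [Ring.lie_def, Finset.sum_mul, Finset.mul_sum, ← mul_kronecker_mul,
    ← ptraceBLinearMap_apply, map_sub, map_sum]
  simp only [ptraceBLinearMap_apply, ptraceB_kronecker, trace_mul_vecMulVec_star,
    trace_vecMulVec_star_mul, smul_mul_assoc, mul_smul_comm]

theorem trace_sum_kronecker_mul_kronecker_mul_sum_kronecker_mul_kronecker {N : Type*} [Fintype N]
    (A : N → Matrix ιA ιA ℂ) (B : N → Matrix ιB ιB ℂ) (M C : Matrix ιA ιA ℂ)
    (M' D : Matrix ιB ιB ℂ) :
    ((∑ n, A n ⊗ₖ B n) * (M ⊗ₖ M') * (∑ n, A n ⊗ₖ B n) * (C ⊗ₖ D)).trace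
      = ∑ n, ∑ m, (A n * M * A m * C).trace * (B n * M' * B m * D).trace := by
  simp only [Finset.sum_mul, Finset.mul_sum, ← mul_kronecker_mul, trace_sum, trace_kronecker]
  exact Finset.sum_comm

end PartialTrace

theorem hasDerivAt_exp_smul_mul_mul_exp_neg_smul {𝔸 : Type*} [NormedRing 𝔸] [NormedAlgebra ℝ 𝔸]
    [CompleteSpace 𝔸] (K a : 𝔸) (t : ℝ) :
    HasDerivAt (fun t : ℝ => NormedSpace.exp (t • K) * a * NormedSpace.exp (-(t • K)))
      ⁅K, NormedSpace.exp (t • K) * a * NormedSpace.exp (-(t • K))⁆ t := by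
  simp only [← smul_neg]
  convert ((hasDerivAt_exp_smul_const' K t).mul_const a).fun_mul (hasDerivAt_exp_smul_const (-K) t)
    using 1
  rw [Ring.lie_def]; noncomm_ring

theorem LinearMap.hasDerivAt_comp {E F : Type*} [NormedAddCommGroup E] [NormedSpace ℝ E]
    [FiniteDimensional ℝ E] [NormedAddCommGroup F] [NormedSpace ℝ F] (L : E →ₗ[ℝ] F)
    {g : ℝ → E} {g' : E} {t : ℝ} (h : HasDerivAt g g' t) :
    HasDerivAt (fun s => L (g s)) (L g') t :=
  L.toContinuousLinearMap.hasFDerivAt.comp_hasDerivAt t h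

section MatrixCalculus

-- Matrices carry no global norm; any one will do for the derivatives of this section.
attribute [local instance] Matrix.linftyOpNormedRing Matrix.linftyOpNormedAlgebra

variable {n : Type*} [Fintype n] [DecidableEq n]

theorem HasDerivAt.ptraceB {ιA ιB : Type*} [Fintype ιA] [DecidableEq ιA] [Fintype ιB]
    [DecidableEq ιB] {g : ℝ → Matrix (ιA × ιB) (ιA × ιB) ℂ} {g' : Matrix (ιA × ιB) (ιA × ιB) ℂ}
    {t : ℝ} (h : HasDerivAt g g' t) : HasDerivAt (fun s => ptraceB (g s)) (ptraceB g') t :=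
  (ptraceBLinearMap.restrictScalars ℝ).hasDerivAt_comp h

theorem HasDerivAt.trace {g : ℝ → Matrix n n ℂ} {g' : Matrix n n ℂ} {t : ℝ}
    (h : HasDerivAt g g' t) : HasDerivAt (fun s => (g s).trace) g'.trace t :=
  ((traceLinearMap n ℂ ℂ).restrictScalars ℝ).hasDerivAt_comp h

theorem HasDerivAt.trace_pow {g : ℝ → Matrix n n ℂ} {g' : Matrix n n ℂ} {t : ℝ}
    (h : HasDerivAt g g' t) (k : ℕ) :
    HasDerivAt (fun s => (g s ^ (k + 1)).trace) ((k + 1) * (g t ^ k * g').trace) t := by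
  convert (h.fun_pow' (k + 1)).trace using 1
  have hterm : ∀ i ∈ Finset.range (k + 1),
      (g t ^ (k - i) * g' * g t ^ i).trace = (g t ^ k * g').trace := by
    intro i hi
    rw [trace_mul_comm, ← Matrix.mul_assoc, ← pow_add,
      Nat.add_sub_cancel' (Nat.le_of_lt_succ (Finset.mem_range.mp hi))]
  rw [Nat.pred_succ, trace_sum, Finset.sum_congr rfl hterm, Finset.sum_const, Finset.card_range,
    nsmul_eq_mul]
  push_cast; ring

theorem hasDerivAt_deriv_trace_pow {g g₁ : ℝ → Matrix n n ℂ} {g₂ : Matrix n n ℂ} {t₀ : ℝ}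
    (hg : ∀ t, HasDerivAt g (g₁ t) t) (hg₁ : HasDerivAt g₁ g₂ t₀) (k : ℕ) :
    HasDerivAt (deriv fun t => (g t ^ (k + 1)).trace)
      ((k + 1) * ((∑ i ∈ Finset.range k, g t₀ ^ (k.pred - i) * g₁ t₀ * g t₀ ^ i) * g₁ t₀
        + g t₀ ^ k * g₂).trace) t₀ := by
  rw [funext fun t => ((hg t).trace_pow k).deriv]
  exact ((((hg t₀).fun_pow' k).mul hg₁).trace).const_mul _

theorem hasDerivAt_deriv_trace_pow_of_isIdempotentElem {g g₁ : ℝ → Matrix n n ℂ}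
    {g₂ : Matrix n n ℂ} {t₀ : ℝ} (hg : ∀ t, HasDerivAt g (g₁ t) t) (hg₁ : HasDerivAt g₁ g₂ t₀)
    (hP : IsIdempotentElem (g t₀)) (hPcP : g t₀ * g₁ t₀ * g t₀ = 0)
    (hc : g t₀ * g₁ t₀ + g₁ t₀ * g t₀ = g₁ t₀) (k : ℕ) :
    HasDerivAt (deriv fun t => (g t ^ (k + 2)).trace)
      ((k + 2) * (2 * (g t₀ * g₁ t₀ * g₁ t₀).trace + (g t₀ * g₂).trace)) t₀ := by
  convert hasDerivAt_deriv_trace_pow hg hg₁ (k + 1) using 1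
  rw [Nat.pred_succ, Finset.sum_mul, trace_add, hP.trace_sum_pow_mul_mul_pow_mul hPcP hc,
    hP.pow_eq k.succ_ne_zero]
  push_cast; ring

theorem hasDerivAt_deriv_trace_pow_ptraceB_conj_exp {ιA ιB : Type*} [Fintype ιA]
    [DecidableEq ιA] [Fintype ιB] [DecidableEq ιB] (K ρ₀ : Matrix (ιA × ιB) (ιA × ιB) ℂ)
    (hP : IsIdempotentElem (ptraceB ρ₀))
    (hPcP : ptraceB ρ₀ * ptraceB ⁅K, ρ₀⁆ * ptraceB ρ₀ = 0)
    (hc : ptraceB ρ₀ * ptraceB ⁅K, ρ₀⁆ + ptraceB ⁅K, ρ₀⁆ * ptraceB ρ₀ = ptraceB ⁅K, ρ₀⁆)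
    (k : ℕ) :
    (∀ t : ℝ, DifferentiableAt ℝ (fun t : ℝ => (ptraceB (NormedSpace.exp (t • K) * ρ₀ *
      NormedSpace.exp (-(t • K))) ^ (k + 2)).trace) t) ∧
    HasDerivAt (deriv fun t : ℝ => (ptraceB (NormedSpace.exp (t • K) * ρ₀ *
      NormedSpace.exp (-(t • K))) ^ (k + 2)).trace)
      ((k + 2) * (2 * (ptraceB ρ₀ * ptraceB ⁅K, ρ₀⁆ * ptraceB ⁅K, ρ₀⁆).trace
        + (ptraceB ρ₀ * ptraceB ⁅K, ⁅K, ρ₀⁆⁆).trace)) 0 := by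
  have : CompleteSpace (Matrix (ιA × ιB) (ιA × ιB) ℂ) := FiniteDimensional.complete ℝ _
  set ρ := fun t : ℝ => NormedSpace.exp (t • K) * ρ₀ * NormedSpace.exp (-(t • K))
  have hρd : ∀ t, HasDerivAt ρ ⁅K, ρ t⁆ t := hasDerivAt_exp_smul_mul_mul_exp_neg_smul K ρ₀
  have hρ0 : ρ 0 = ρ₀ := by simp [ρ]
  have hlie : HasDerivAt (fun t => ⁅K, ρ t⁆) ⁅K, ⁅K, ρ 0⁆⁆ 0 :=
    ((hρd 0).const_mul K).fun_sub ((hρd 0).mul_const K)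
  refine ⟨fun t => (((hρd t).ptraceB).trace_pow (k + 1)).differentiableAt, ?_⟩
  rw [← hρ0] at hP hPcP hc
  have key := hasDerivAt_deriv_trace_pow_of_isIdempotentElem (fun t => (hρd t).ptraceB)
    hlie.ptraceB hP hPcP hc k
  rwa [hρ0] at key

end MatrixCalculus

theorem trace_mul_ptraceB_lie_lie_kronecker {ιA ιB N : Type*} [Fintype ιA] [DecidableEq ιA]
    [Fintype ιB] [DecidableEq ιB] [Fintype N] {ψA : ιA → ℂ} (hψA : star ψA ⬝ᵥ ψA = 1)
    (ψB : ιB → ℂ) (A : N → Matrix ιA ιA ℂ) (B : N → Matrix ιB ιB ℂ) :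
    (vecMulVec ψA (star ψA) * ptraceB ⁅∑ n, A n ⊗ₖ B n, ⁅∑ n, A n ⊗ₖ B n,
      vecMulVec ψA (star ψA) ⊗ₖ vecMulVec ψB (star ψB)⁆⁆).trace
      = 2 * ∑ n, ∑ m, expval ψA (A n * (1 - vecMulVec ψA (star ψA)) * A m)
          * expval ψB (B n * B m) := by
  have hP := (isIdempotentElem_vecMulVec_star hψA).eq
  have hsub : (1 - vecMulVec ψA (star ψA)) ⊗ₖ (1 : Matrix ιB ιB ℂ)
      = 1 - vecMulVec ψA (star ψA) ⊗ₖ 1 := by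
    rw [eq_sub_iff_add_eq, ← add_kronecker, sub_add_cancel, one_kronecker_one]
  rw [trace_mul_ptraceB, trace_mul_lie_lie_of_mul_eq, ← hsub,
    trace_sum_kronecker_mul_kronecker_mul_sum_kronecker_mul_kronecker]
  · simp only [Matrix.mul_one, trace_mul_vecMulVec_star]
  · rw [← mul_kronecker_mul, hP, Matrix.one_mul]
  · rw [← mul_kronecker_mul, hP, Matrix.mul_one]

theorem renyi_trace_second_deriv_general {ιA ιB : Type*}
    [Fintype ιA] [DecidableEq ιA]
    [Fintype ιB] [DecidableEq ιB]
    (ψA : ιA → ℂ) (ψB : ιB → ℂ)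
    (hψA : star ψA ⬝ᵥ ψA = 1) (hψB : star ψB ⬝ᵥ ψB = 1)
    {N : Type*} [Fintype N]
    (A : N → Matrix ιA ιA ℂ) (B : N → Matrix ιB ιB ℂ)
    (H : Matrix (ιA × ιB) (ιA × ιB) ℂ)
    (hH : H = ∑ n, (A n) ⊗ₖ (B n))
    (ρ₀ : Matrix (ιA × ιB) (ιA × ιB) ℂ)
    (hρ₀ : ρ₀ = (Matrix.vecMulVec ψA (star ψA)) ⊗ₖ (Matrix.vecMulVec ψB (star ψB)))
    (ρ : ℝ → Matrix (ιA × ιB) (ιA × ιB) ℂ)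
    (hρ : ∀ t : ℝ, ρ t =
      NormedSpace.exp ((-(t : ℂ) * Complex.I) • H) * ρ₀ *
        NormedSpace.exp (((t : ℂ) * Complex.I) • H))
    (α : ℕ) (hα : 2 ≤ α) :
    (∀ t : ℝ, DifferentiableAt ℝ (fun t : ℝ => (ptraceB (ρ t) ^ α).trace) t) ∧
      HasDerivAt (deriv (fun t : ℝ => (ptraceB (ρ t) ^ α).trace))
        (-2 * (α : ℂ) *
          ∑ n, ∑ m,
            (expval ψA (A n * A m) - expval ψA (A n) * expval ψA (A m)) *
              (expval ψB (B n * B m) - expval ψB (B n) * expval ψB (B m))) 0 := by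
  obtain ⟨k, rfl⟩ : ∃ k, α = k + 2 := ⟨α - 2, by omega⟩
  set K := (-Complex.I) • H with hK
  set P := vecMulVec ψA (star ψA) with hPdef
  set X := ∑ n, expval ψB (B n) • A n with hX
  have hP : IsIdempotentElem P := isIdempotentElem_vecMulVec_star hψA
  have hρK : ρ = fun t : ℝ => NormedSpace.exp (t • K) * ρ₀ * NormedSpace.exp (-(t • K)) := by
    funext t
    rw [hρ, hK, ← smul_assoc, ← neg_smul, Complex.real_smul]
    ring_nf
  have hP0 : ptraceB ρ₀ = P := by rw [hρ₀, ptraceB_kronecker_vecMulVec_star hψB]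
  have hc0 : ptraceB ⁅K, ρ₀⁆ = ⁅(-Complex.I) • X, P⁆ := by
    rw [hK, hH, hρ₀, Ring.smul_lie, ptraceB_smul, ptraceB_lie_kronecker_vecMulVec_star,
      Ring.smul_lie]
  obtain ⟨hdiff, hderiv⟩ := hasDerivAt_deriv_trace_pow_ptraceB_conj_exp K ρ₀ (hP0 ▸ hP)
    (by rw [hP0, hc0]; exact hP.mul_lie_mul_eq_zero _)
    (by rw [hP0, hc0]; exact hP.mul_lie_add_lie_mul _) k
  subst hρK
  refine ⟨hdiff, hderiv.congr_deriv ?_⟩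
  have hcc : (P * ⁅(-Complex.I) • X, P⁆ * ⁅(-Complex.I) • X, P⁆).trace
      = ∑ n, ∑ m, expval ψA (A n * (1 - P) * A m) * (expval ψB (B n) * expval ψB (B m)) := by
    rw [hP.trace_mul_lie_mul_lie, hPdef, trace_mul_vecMulVec_star, smul_mul_assoc,
      mul_smul_comm, smul_mul_assoc, expval_smul, expval_smul, hX, expval_sum_smul_mul_mul_sum_smul]
    simp only [smul_eq_mul, ← mul_assoc (-Complex.I), neg_mul_neg, Complex.I_mul_I, neg_one_mul,
      neg_neg]
  have hd : (P * ptraceB ⁅K, ⁅K, ρ₀⁆⁆).trace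
      = -(2 * ∑ n, ∑ m, expval ψA (A n * (1 - P) * A m) * expval ψB (B n * B m)) := by
    rw [hK, Ring.smul_lie, Ring.smul_lie, Ring.lie_smul, smul_smul, ptraceB_smul, mul_smul_comm,
      trace_smul, hH, hρ₀, hPdef, trace_mul_ptraceB_lie_lie_kronecker hψA, smul_eq_mul,
      neg_mul_neg, Complex.I_mul_I, neg_one_mul]
  rw [hP0, hc0, hcc, hd]
  simp only [hPdef, expval_mul_one_sub_vecMulVec_star_mul]
  simp only [mul_sub, Finset.sum_sub_distrib]
  push_cast
  ring

/-- **Universal second-order growth of Rényi traces.**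
In the unitary product-state setup, for every natural `α ≥ 2` the function
`f t = trace ((ρ_A t) ^ α)` is twice differentiable at `t = 0` and its second derivative
there is `−2α · Σ_{n,m} Cov_A(n,m) · Cov_B(n,m)`, so all Rényi entropies grow at
leading order with the same universal timescale. -/
theorem renyi_trace_second_deriv {ιA ιB : Type*}
    [Fintype ιA] [DecidableEq ιA] [Nonempty ιA]
    [Fintype ιB] [DecidableEq ιB] [Nonempty ιB]
    (ψA : ιA → ℂ) (ψB : ιB → ℂ)
    (hψA : star ψA ⬝ᵥ ψA = 1) (hψB : star ψB ⬝ᵥ ψB = 1)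
    {N : Type*} [Fintype N]
    (A : N → Matrix ιA ιA ℂ) (B : N → Matrix ιB ιB ℂ)
    (H : Matrix (ιA × ιB) (ιA × ιB) ℂ)
    (hH : H = ∑ n, (A n) ⊗ₖ (B n))
    (hHerm : H.IsHermitian)
    (ρ₀ : Matrix (ιA × ιB) (ιA × ιB) ℂ)
    (hρ₀ : ρ₀ = (Matrix.vecMulVec ψA (star ψA)) ⊗ₖ (Matrix.vecMulVec ψB (star ψB)))
    (ρ : ℝ → Matrix (ιA × ιB) (ιA × ιB) ℂ)
    (hρ : ∀ t : ℝ, ρ t =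
      NormedSpace.exp ((-(t : ℂ) * Complex.I) • H) * ρ₀ *
        NormedSpace.exp (((t : ℂ) * Complex.I) • H))
    (α : ℕ) (hα : 2 ≤ α) :
    (∀ t : ℝ, DifferentiableAt ℝ (fun t : ℝ => (ptraceB (ρ t) ^ α).trace) t) ∧
      HasDerivAt (deriv (fun t : ℝ => (ptraceB (ρ t) ^ α).trace))
        (-2 * (α : ℂ) *
          ∑ n, ∑ m,
            (expval ψA (A n * A m) - expval ψA (A n) * expval ψA (A m)) *
              (expval ψB (B n * B m) - expval ψB (B n) * expval ψB (B m))) 0 :=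
  renyi_trace_second_deriv_general ψA ψB hψA hψB A B H hH ρ₀ hρ₀ ρ hρ α hα
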